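/- Let K be a finite simplicial complex whose dual K' is a graph (dim K' = 1). Then for all nonempty faces α, β of K': α ∩ β ≠ ∅ if and only if (⋂α) ∪ (⋂β) is a face of K. Consequently the configuration space Ĥ(K) equals the simplicial deleted product of the graph K'. -/

import Mathlib

open scoped BigOperators

noncomputable section

variable {V : Type*} [Fintype V] [DecidableEq V]

def IsComplex (K : Finset (Finset V)) : Prop :=
  ∅ ∈ K ∧ (∀ v : V, {v} ∈ K) ∧ ∀ F ∈ K, ∀ G ⊆ F, G ∈ K

def facets (K : Finset (Finset V)) : Finset (Finset V) :=
  K.filter fun J => ∀ J' ∈ K, J ⊆ J' → J = J'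

def contV (K : Finset (Finset V)) (i : V) : Finset (Finset V) :=
  (facets K).filter fun J => i ∈ J

def dual (K : Finset (Finset V)) : Finset (Finset (Finset V)) :=
  (facets K).powerset.filter fun α => (α.inf id).Nonempty

def geomFace {W : Type*} [Fintype W] (F : Finset W) : Set (W → ℝ) :=
  {x | (∀ w, 0 ≤ x w) ∧ (∑ w, x w) = 1 ∧ ∀ w, x w ≠ 0 → w ∈ F}

def geom {W : Type*} [Fintype W] (L : Finset (Finset W)) : Set (W → ℝ) :=
  ⋃ F ∈ L, geomFace F

def supp {W : Type*} [Fintype W] [DecidableEq W] (x : W → ℝ) : Finset W :=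
  Finset.univ.filter fun w => x w ≠ 0

def Faithful {d : ℕ} (K : Finset (Finset V))
    (f : (Finset V → ℝ) → EuclideanSpace ℝ (Fin d)) : Prop :=
  ∀ I : Finset V, (⋂ i ∈ I, f '' geomFace (contV K i)).Nonempty → I ∈ K

def affExt {W : Type*} [Fintype W] {E : Type*} [AddCommGroup E] [Module ℝ E]
    (p : W → E) (x : W → ℝ) : E := ∑ w, x w • p w

def Hhat (K : Finset (Finset V)) : Set ((Finset V → ℝ) × (Finset V → ℝ)) :=
  {z | z.1 ∈ geom (dual K) ∧ z.2 ∈ geom (dual K) ∧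
    ((supp z.1).inf id ∪ (supp z.2).inf id) ∉ K}

def Matousek (d : ℕ) (K : Finset (Finset V)) : Prop :=
  ∃ g : Hhat K → EuclideanSpace ℝ (Fin d),
    Continuous g ∧ (∀ z, ‖g z‖ = 1) ∧
    ∀ (x y : Finset V → ℝ) (hxy : (x, y) ∈ Hhat K) (hyx : (y, x) ∈ Hhat K),
      g ⟨(y, x), hyx⟩ = - g ⟨(x, y), hxy⟩

def Representable (d : ℕ) (K : Finset (Finset V)) : Prop :=
  ∃ C : V → Set (EuclideanSpace ℝ (Fin d)),
    (∀ i, Convex ℝ (C i)) ∧ ∀ I : Finset V, I ∈ K ↔ (⋂ i ∈ I, C i).Nonempty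

def dimOf {W : Type*} [Fintype W] [DecidableEq W] (L : Finset (Finset W)) : ℕ :=
  (L.sup Finset.card) - 1

/-- The simplicial deleted product of a complex. -/
def delProd {W : Type*} [Fintype W] [DecidableEq W] (G : Finset (Finset W)) :
    Set ((W → ℝ) × (W → ℝ)) :=
  {z | z.1 ∈ geom G ∧ z.2 ∈ geom G ∧ supp z.1 ∩ supp z.2 = ∅}

lemma card_le_dimOf_add_one {W : Type*} [Fintype W] [DecidableEq W] {L : Finset (Finset W)}
    {a : Finset W} (ha : a ∈ L) : a.card ≤ dimOf L + 1 := by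
  have := Finset.le_sup (f := Finset.card) ha
  unfold dimOf
  omega

section Facets

variable {K : Finset (Finset V)}

lemma mem_facets_iff_maximal {F : Finset V} : F ∈ facets K ↔ Maximal (· ∈ K) F := by
  simp only [facets, Finset.mem_filter, Maximal]
  exact and_congr_right fun _ =>
    forall₂_congr fun J _ => imp_congr_right fun hFJ => ⟨fun h => h ▸ le_rfl, hFJ.antisymm⟩

lemma facets_subset (K : Finset (Finset V)) : facets K ⊆ K :=
  Finset.filter_subset _ _

lemma exists_mem_facets_superset {G : Finset V} (hG : G ∈ K) : ∃ F ∈ facets K, G ⊆ F := by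
  obtain ⟨F, hGF, hF⟩ := K.exists_le_maximal hG
  exact ⟨F, mem_facets_iff_maximal.2 hF, hGF⟩

lemma eq_of_mem_facets_of_subset {A F : Finset V} (hA : A ∈ facets K) (hF : F ∈ K)
    (hAF : A ⊆ F) : A = F :=
  (mem_facets_iff_maximal.1 hA).eq_of_le hF hAF

end Facets

section Dual

variable {K : Finset (Finset V)}

lemma mem_dual {a : Finset (Finset V)} :
    a ∈ dual K ↔ a ⊆ facets K ∧ (a.inf id).Nonempty := by
  simp only [dual, Finset.mem_filter, Finset.mem_powerset]

lemma mem_dual_of_subset {a b : Finset (Finset V)} (hba : b ⊆ a) (ha : a ∈ dual K) :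
    b ∈ dual K := by
  rw [mem_dual] at ha ⊢
  exact ⟨hba.trans ha.1, ha.2.mono (Finset.inf_mono hba)⟩

lemma insert_mem_dual {a : Finset (Finset V)} {F : Finset V} (ha : a ∈ dual K)
    (hF : F ∈ facets K) (haF : a.inf id ⊆ F) : insert F a ∈ dual K := by
  rw [mem_dual] at ha ⊢
  refine ⟨Finset.insert_subset hF ha.1, ?_⟩
  rw [Finset.inf_insert, id, Finset.inf_eq_inter, Finset.inter_eq_right.2 haF]
  exact ha.2

/-- If `F ∉ c`, then `insert F c` is still a face of the dual with one more element, so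
`c = {A}` with `A ⊆ F`, and maximality of the facet `A` gives `A = F`. -/
lemma mem_of_inf_subset_mem_facets (hcard : ∀ a ∈ dual K, a.card ≤ 2)
    {c : Finset (Finset V)} (hc : c ∈ dual K) (hcne : c.Nonempty) {F : Finset V}
    (hF : F ∈ facets K) (hcF : c.inf id ⊆ F) : F ∈ c := by
  by_contra hFc
  have hins := hcard _ (insert_mem_dual hc hF hcF)
  rw [Finset.card_insert_of_notMem hFc] at hins
  obtain ⟨A, rfl⟩ := Finset.card_eq_one.1 (by have := hcne.card_pos; omega : c.card = 1)
  rw [Finset.inf_singleton, id] at hcF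
  have hAF := eq_of_mem_facets_of_subset ((mem_dual.1 hc).1 (Finset.mem_singleton_self A))
    (facets_subset K hF) hcF
  exact hFc (hAF ▸ Finset.mem_singleton_self A)

theorem inter_nonempty_iff_union_mem (hdown : ∀ F ∈ K, ∀ G ⊆ F, G ∈ K)
    (hcard : ∀ a ∈ dual K, a.card ≤ 2) {a b : Finset (Finset V)} (ha : a ∈ dual K)
    (hb : b ∈ dual K) (hane : a.Nonempty) (hbne : b.Nonempty) :
    (a ∩ b).Nonempty ↔ (a.inf id ∪ b.inf id) ∈ K := by
  constructor
  · rintro ⟨F, hF⟩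
    rw [Finset.mem_inter] at hF
    exact hdown F (facets_subset K ((mem_dual.1 ha).1 hF.1)) _
      (Finset.union_subset (Finset.inf_le (f := id) hF.1) (Finset.inf_le (f := id) hF.2))
  · intro hab
    obtain ⟨F, hF, habF⟩ := exists_mem_facets_superset hab
    have hFa :=
      mem_of_inf_subset_mem_facets hcard ha hane hF (Finset.subset_union_left.trans habF)
    have hFb :=
      mem_of_inf_subset_mem_facets hcard hb hbne hF (Finset.subset_union_right.trans habF)
    exact ⟨F, Finset.mem_inter.2 ⟨hFa, hFb⟩⟩

end Dual

section Geometry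

variable {W : Type*} [Fintype W] [DecidableEq W]

lemma supp_subset_of_mem_geomFace {F : Finset W} {x : W → ℝ} (hx : x ∈ geomFace F) :
    supp x ⊆ F := fun w hw => hx.2.2 w (Finset.mem_filter.1 hw).2

lemma supp_nonempty_of_mem_geomFace {F : Finset W} {x : W → ℝ} (hx : x ∈ geomFace F) :
    (supp x).Nonempty := by
  obtain ⟨w, -, hw⟩ := Finset.exists_ne_zero_of_sum_ne_zero (hx.2.1 ▸ one_ne_zero)
  exact ⟨w, Finset.mem_filter.2 ⟨Finset.mem_univ w, hw⟩⟩

lemma supp_mem_dual_of_mem_geom {K : Finset (Finset V)} {x : Finset V → ℝ}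
    (hx : x ∈ geom (dual K)) : supp x ∈ dual K ∧ (supp x).Nonempty := by
  obtain ⟨a, ha, hxa⟩ := Set.mem_iUnion₂.1 hx
  exact ⟨mem_dual_of_subset (supp_subset_of_mem_geomFace hxa) ha,
    supp_nonempty_of_mem_geomFace hxa⟩

end Geometry

theorem Hhat_eq_delProd {K : Finset (Finset V)}
    (h : ∀ a ∈ dual K, ∀ b ∈ dual K, a.Nonempty → b.Nonempty →
      ((a ∩ b).Nonempty ↔ (a.inf id ∪ b.inf id) ∈ K)) :
    Hhat K = delProd (dual K) := by
  ext ⟨x, y⟩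
  refine and_congr_right fun hx => and_congr_right fun hy => ?_
  obtain ⟨hxd, hxne⟩ := supp_mem_dual_of_mem_geom hx
  obtain ⟨hyd, hyne⟩ := supp_mem_dual_of_mem_geom hy
  rw [← h _ hxd _ hyd hxne hyne, ← Finset.not_nonempty_iff_eq_empty]

/-- if the dual of `K` is a graph, then for nonempty faces
`α, β` of `K'`, `α ∩ β ≠ ∅` iff `(⋂α) ∪ (⋂β) ∈ K`; consequently the
configuration space `Ĥ(K)` equals the deleted product of `K'`. -/
theorem stmt16 (K : Finset (Finset V)) (hK : IsComplex K)
    (hdim : dimOf (dual K) = 1) :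
    (∀ a ∈ dual K, ∀ b ∈ dual K, a.Nonempty → b.Nonempty →
      ((a ∩ b).Nonempty ↔ (a.inf id ∪ b.inf id) ∈ K)) ∧
    Hhat K = delProd (dual K) := by
  have hcard : ∀ a ∈ dual K, a.card ≤ 2 := fun a ha =>
    (card_le_dimOf_add_one ha).trans_eq (by rw [hdim])
  have key : ∀ a ∈ dual K, ∀ b ∈ dual K, a.Nonempty → b.Nonempty →
      ((a ∩ b).Nonempty ↔ (a.inf id ∪ b.inf id) ∈ K) :=
    fun a ha b hb => inter_nonempty_iff_union_mem hK.2.2 hcard ha hb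
  exact ⟨key, Hhat_eq_delProd key⟩
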